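/- Let n ≥ 3, let M be a connected topological (n−1)-manifold, and let r : M → ℝⁿ be a continuous map such that r(M) is bounded, M is complete with respect to the induced length pseudometric d_r, r is locally convex at every point of M, and r is strictly locally convex at a point o ∈ M, witnessed by a closed convex set K₀ and a nonzero vector u ∈ ℝⁿ with K₀ \ {r(o)} ⊆ {x | ⟪x − r(o), u⟫ > 0}. Then a convex part centered at o exists: there exist z > 0, a compact convex set K ⊆ ℝⁿ with nonempty interior, and a connected open subset 𝒞 of M with o ∈ 𝒞, such that r restricted to 𝒞 is a homeomorphism onto C := frontier(K) ∩ {x | ⟪x − r(o), u⟫ < z}, and frontier(K) \ C ⊆ {x | ⟪x − r(o), u⟫ = z}. -/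

import Mathlib

open scoped RealInnerProductSpace ENNReal
open Set

/-- Euclidean `n`-space `ℝⁿ`. -/
noncomputable abbrev Euc (n : ℕ) : Type := EuclideanSpace ℝ (Fin n)

/-- `M` is a topological `d`-manifold: every point has an open neighborhood
homeomorphic to `ℝ^d` (Hausdorffness is assumed separately via `T2Space`). -/
def IsTopManifoldOfDim (M : Type*) [TopologicalSpace M] (d : ℕ) : Prop :=
  ∀ p : M, ∃ U : Set M, IsOpen U ∧ p ∈ U ∧ Nonempty (U ≃ₜ Euc d)

/-- `r : M → ℝⁿ` is locally convex at `p` (in the sense of Bouligand): some open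
neighborhood `U` of `p` is mapped by `r` homeomorphically onto an open subset `V` of
the frontier of a closed convex body `K`, with `r p ∈ V`. -/
def IsLocallyConvexAt {M : Type*} [TopologicalSpace M] {n : ℕ}
    (r : M → Euc n) (p : M) : Prop :=
  ∃ (U : Set M) (K V : Set (Euc n)),
    IsOpen U ∧ p ∈ U ∧
    IsClosed K ∧ Convex ℝ K ∧ (interior K).Nonempty ∧
    V ⊆ frontier K ∧ r p ∈ V ∧ (∃ W : Set (Euc n), IsOpen W ∧ V = W ∩ frontier K) ∧
    ∃ e : U ≃ₜ V, ∀ x : U, (e x : Euc n) = r x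

/-- `r : M → ℝⁿ` is strictly locally convex at `p`: locally convex at `p`, where
moreover the convex body `K` can be chosen together with a nonzero vector `u` such that
`K \ {r p}` lies in the open half-space `{x | ⟪x - r p, u⟫ > 0}`. -/
def IsStrictlyLocallyConvexAt {M : Type*} [TopologicalSpace M] {n : ℕ}
    (r : M → Euc n) (p : M) : Prop :=
  ∃ (U : Set M) (K V : Set (Euc n)) (u : Euc n),
    u ≠ 0 ∧ (∀ x ∈ K \ {r p}, 0 < ⟪x - r p, u⟫) ∧
    IsOpen U ∧ p ∈ U ∧
    IsClosed K ∧ Convex ℝ K ∧ (interior K).Nonempty ∧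
    V ⊆ frontier K ∧ r p ∈ V ∧ (∃ W : Set (Euc n), IsOpen W ∧ V = W ∩ frontier K) ∧
    ∃ e : U ≃ₜ V, ∀ x : U, (e x : Euc n) = r x

/-- The length (total variation) of the image under `r` of a path `γ` in `M`. -/
noncomputable def pathLength {M : Type*} [TopologicalSpace M] {n : ℕ}
    (r : M → Euc n) {p q : M} (γ : Path p q) : ℝ≥0∞ :=
  eVariationOn (fun t => r (γ t)) Set.univ

/-- The length pseudometric on `M` induced by `r`. -/
noncomputable def lengthDist {M : Type*} [TopologicalSpace M] {n : ℕ}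
    (r : M → Euc n) (p q : M) : ℝ≥0∞ :=
  ⨅ γ : Path p q, pathLength r γ

/-- `M` is complete with respect to the induced length pseudometric: every sequence
that is Cauchy for `lengthDist r` converges in the topology of `M`. -/
def CompleteWrtLengthDist {M : Type*} [TopologicalSpace M] {n : ℕ}
    (r : M → Euc n) : Prop :=
  ∀ x : ℕ → M,
    (∀ ε : ℝ≥0∞, 0 < ε → ∃ N : ℕ, ∀ m ≥ N, ∀ k ≥ N, lengthDist r (x m) (x k) < ε) →
    ∃ p : M, Filter.Tendsto x Filter.atTop (nhds p)

open Bornology Metric Topology Filter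
open scoped Pointwise

/-!
The convex part is cut out of the convex body `K₀` by the half-space of height `< z` above
`r o`, the height being `⟪x - r o, u⟫`. Strict convexity makes the slices of `K₀` below a given
height compact and shrink to `r o`, so for small `z` the part of `frontier K₀` below height `z`
lies in the chart around `o`; its preimage under `r` is `𝒞`. The cap of the truncated body below
height `z` is connected: two points of it are joined by the radial projection, from an interior
point higher than both, of the segment between them.
-/

section RadialProjection

lemma mem_frontier_neg_vadd_iff {G : Type*} [TopologicalSpace G] [AddGroup G]
    [IsTopologicalAddGroup G] {K : Set G} {w v : G} :
    v ∈ frontier (-w +ᵥ K) ↔ w + v ∈ frontier K := by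
  have h := (Homeomorph.vadd (-w)).image_frontier K
  simp only [Homeomorph.vadd_apply, image_vadd] at h
  rw [← h, mem_vadd_set_iff_neg_vadd_mem, neg_neg, vadd_eq_add]

lemma neg_vadd_mem_nhds_zero {G : Type*} [TopologicalSpace G] [AddGroup G]
    [IsTopologicalAddGroup G] {K : Set G} {w : G} (hw : w ∈ interior K) :
    -w +ᵥ K ∈ 𝓝 (0 : G) := by
  rw [← mem_interior_iff_mem_nhds, interior_vadd, mem_vadd_set_iff_neg_vadd_mem]
  simpa using hw

variable {E : Type*} [NormedAddCommGroup E] [NormedSpace ℝ E]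

noncomputable def radialProj (K : Set E) (w y : E) : E :=
  w + (gauge (-w +ᵥ K) (y - w))⁻¹ • (y - w)

variable {K : Set E} {w y : E}

lemma gauge_neg_vadd_sub_pos (hKb : IsBounded K) (hw : w ∈ interior K) (hy : y ≠ w) :
    0 < gauge (-w +ᵥ K) (y - w) :=
  (gauge_pos (absorbent_nhds_zero (neg_vadd_mem_nhds_zero hw))
    (NormedSpace.isVonNBounded_of_isBounded ℝ (hKb.vadd _))).2 (sub_ne_zero.2 hy)

lemma radialProj_mem_frontier (hKc : Convex ℝ K) (hKb : IsBounded K) (hw : w ∈ interior K)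
    (hy : y ≠ w) : radialProj K w y ∈ frontier K := by
  have hpos := gauge_neg_vadd_sub_pos hKb hw hy
  rw [radialProj, ← mem_frontier_neg_vadd_iff,
    ← gauge_eq_one_iff_mem_frontier (hKc.vadd _) (neg_vadd_mem_nhds_zero hw),
    gauge_smul_of_nonneg (inv_nonneg.2 hpos.le), smul_eq_mul, inv_mul_cancel₀ hpos.ne']

lemma radialProj_of_mem_frontier (hKc : Convex ℝ K) (hw : w ∈ interior K)
    (hy : y ∈ frontier K) : radialProj K w y = y := by
  have : gauge (-w +ᵥ K) (y - w) = 1 := by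
    rwa [gauge_eq_one_iff_mem_frontier (hKc.vadd _) (neg_vadd_mem_nhds_zero hw),
      mem_frontier_neg_vadd_iff, add_sub_cancel]
  rw [radialProj, this, inv_one, one_smul, add_sub_cancel]

lemma continuousOn_radialProj (hKc : Convex ℝ K) (hKb : IsBounded K) (hw : w ∈ interior K) :
    ContinuousOn (radialProj K w) {w}ᶜ := by
  have h₀ := neg_vadd_mem_nhds_zero hw
  refine continuousOn_const.add (ContinuousOn.smul ?_ (continuousOn_id.sub continuousOn_const))
  exact ((continuous_gauge (hKc.vadd _) h₀).comp_continuousOn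
    (continuousOn_id.sub continuousOn_const)).inv₀
      fun y hy => (gauge_neg_vadd_sub_pos hKb hw hy).ne'

lemma exists_one_le_radialProj_eq (hKb : IsBounded K) (hw : w ∈ interior K) (hyK : y ∈ K)
    (hy : y ≠ w) : ∃ t : ℝ, 1 ≤ t ∧ radialProj K w y = w + t • (y - w) := by
  refine ⟨(gauge (-w +ᵥ K) (y - w))⁻¹,
    (one_le_inv₀ (gauge_neg_vadd_sub_pos hKb hw hy)).2 (gauge_le_one_of_mem ?_), rfl⟩
  rw [mem_vadd_set_iff_neg_vadd_mem]
  simpa using hyK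

end RadialProjection

section HeightFunction

variable {E : Type*} [NormedAddCommGroup E] [InnerProductSpace ℝ E] {K : Set E} {a u : E}

lemma convexOn_inner_sub (a u : E) : ConvexOn ℝ univ fun x : E => ⟪x - a, u⟫ := by
  refine ⟨convex_univ, fun x _ y _ s t _ _ hst => le_of_eq ?_⟩
  show ⟪s • x + t • y - a, u⟫ = s * ⟪x - a, u⟫ + t * ⟪y - a, u⟫
  rw [← real_inner_smul_left, ← real_inner_smul_left, ← inner_add_left]
  congr 1
  linear_combination (norm := module) hst • a

lemma convex_setOf_inner_sub_le (a u : E) (z : ℝ) : Convex ℝ {x : E | ⟪x - a, u⟫ ≤ z} := by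
  simpa using (convexOn_inner_sub a u).convex_le z

lemma isPreconnected_frontier_inter_setOf_inner_sub_lt (hKcl : IsClosed K) (hKc : Convex ℝ K)
    (hKb : IsBounded K) {z : ℝ} (hz : ∀ c < z, ∃ w ∈ interior K, c < ⟪w - a, u⟫) :
    IsPreconnected (frontier K ∩ {x | ⟪x - a, u⟫ < z}) := by
  refine isPreconnected_of_forall_pair ?_
  rintro x ⟨hx, hxz : ⟪x - a, u⟫ < z⟩ y ⟨hy, hyz : ⟪y - a, u⟫ < z⟩
  have hmax : ∀ p ∈ segment ℝ x y, ⟪p - a, u⟫ ≤ max ⟪x - a, u⟫ ⟪y - a, u⟫ := fun p hp =>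
    (convexOn_inner_sub a u).le_on_segment (mem_univ x) (mem_univ y) hp
  obtain ⟨w, hw, hwxy⟩ := hz _ (max_lt hxz hyz)
  have hne : ∀ p ∈ segment ℝ x y, p ≠ w := by
    rintro p hp rfl
    exact (hmax p hp).not_gt hwxy
  refine ⟨radialProj K w '' segment ℝ x y, ?_,
    ⟨x, left_mem_segment ℝ x y, radialProj_of_mem_frontier hKc hw hx⟩,
    ⟨y, right_mem_segment ℝ x y, radialProj_of_mem_frontier hKc hw hy⟩,
    (convex_segment x y).isPreconnected.image _
      ((continuousOn_radialProj hKc hKb hw).mono fun p hp => hne p hp)⟩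
  rintro _ ⟨p, hp, rfl⟩
  refine ⟨radialProj_mem_frontier hKc hKb hw (hne p hp), ?_⟩
  have hpK : p ∈ K := hKc.segment_subset (hKcl.frontier_subset hx) (hKcl.frontier_subset hy) hp
  obtain ⟨t, ht, hρ⟩ := exists_one_le_radialProj_eq hKb hw hpK (hne p hp)
  -- beyond `p`, the ray from `w` descends, since `p` lies below `w`
  have hρp : ⟪radialProj K w p - a, u⟫ ≤ ⟪p - a, u⟫ := by
    rw [hρ, show w + t • (p - w) - a = (w - a) + t • ((p - a) - (w - a)) by module,
      inner_add_left, real_inner_smul_left, inner_sub_left (p - a)]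
    nlinarith [hmax p hp]
  exact hρp.trans_lt ((hmax p hp).trans_lt (max_lt hxz hyz))

end HeightFunction

section Sublevel

variable {X : Type*} [TopologicalSpace X] {f : X → ℝ} {s : Set X} {z : ℝ}

lemma frontier_inter_setOf_le_inter_setOf_lt (hf : Continuous f) :
    frontier (s ∩ {x | f x ≤ z}) ∩ {x | f x < z} = frontier s ∩ {x | f x < z} := by
  have hO : IsOpen {x | f x < z} := isOpen_lt hf continuous_const
  have hsub : {x | f x < z} ⊆ {x | f x ≤ z} := fun _ (hx : _ < z) => hx.le
  rw [← frontier_inter_open_inter hO, ← frontier_inter_open_inter (s := s) hO, inter_assoc,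
    inter_eq_right.2 hsub]

lemma frontier_inter_setOf_le_diff_subset (hf : Continuous f) :
    frontier (s ∩ {x | f x ≤ z}) \ {x | f x < z} ⊆ {x | f x = z} := fun _ ⟨hx, hxz⟩ =>
  le_antisymm (closure_minimal inter_subset_right (isClosed_le hf continuous_const)
    (frontier_subset_closure hx)) (not_lt.1 hxz)

end Sublevel

section ConvexCap

variable {E : Type*} [NormedAddCommGroup E] [InnerProductSpace ℝ E] {K : Set E} {a u : E}

lemma isBounded_inter_setOf_inner_sub_le [ProperSpace E] (hK : IsClosed K) (hKc : Convex ℝ K)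
    (ha : a ∈ K) (hpos : ∀ x ∈ K \ {a}, 0 < ⟪x - a, u⟫) (c : ℝ) :
    IsBounded (K ∩ {x | ⟪x - a, u⟫ ≤ c}) := by
  obtain ⟨δ, hδ, hδf⟩ : ∃ δ, 0 < δ ∧ ∀ y ∈ K ∩ sphere a 1, δ ≤ ⟪y - a, u⟫ :=
    ((isCompact_sphere a 1).inter_left hK).exists_forall_le'
      (Continuous.continuousOn (by fun_prop)) fun y hy =>
        hpos y ⟨hy.1, by rintro rfl; simpa using hy.2⟩
  refine (isBounded_closedBall (x := a) (r := max 1 (c / δ))).subset ?_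
  rintro x ⟨hxK, hxc : ⟪x - a, u⟫ ≤ c⟩
  rw [mem_closedBall, dist_eq_norm]
  rcases le_or_gt ‖x - a‖ 1 with hx1 | hx1
  · exact le_max_of_le_left hx1
  -- rescale `x` to the unit sphere around `a`, where the height is at least `δ`
  have hy : a + ‖x - a‖⁻¹ • (x - a) ∈ K ∩ sphere a 1 := by
    refine ⟨hKc.add_smul_sub_mem ha hxK ⟨by positivity, inv_le_one_of_one_le₀ hx1.le⟩, ?_⟩
    rw [mem_sphere, dist_eq_norm, add_sub_cancel_left, norm_smul, norm_inv, norm_norm,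
      inv_mul_cancel₀ (by positivity)]
  have hδx := hδf _ hy
  rw [add_sub_cancel_left, real_inner_smul_left, inv_mul_eq_div, le_div_iff₀ (by positivity)]
    at hδx
  exact le_max_of_le_right ((le_div_iff₀ hδ).2 (by linarith))

lemma isCompact_inter_setOf_inner_sub_le [ProperSpace E] (hK : IsClosed K) (hKc : Convex ℝ K)
    (ha : a ∈ K) (hpos : ∀ x ∈ K \ {a}, 0 < ⟪x - a, u⟫) (c : ℝ) :
    IsCompact (K ∩ {x | ⟪x - a, u⟫ ≤ c}) :=
  (isBounded_inter_setOf_inner_sub_le hK hKc ha hpos c).isCompact_closure.of_isClosed_subset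
    (hK.inter (isClosed_le (by fun_prop) continuous_const)) subset_closure

lemma exists_pos_inter_setOf_inner_sub_le_subset [ProperSpace E] (hK : IsClosed K)
    (hKc : Convex ℝ K) (ha : a ∈ K) (hpos : ∀ x ∈ K \ {a}, 0 < ⟪x - a, u⟫) {W : Set E}
    (hW : W ∈ 𝓝 a) : ∃ c > 0, K ∩ {x | ⟪x - a, u⟫ ≤ c} ⊆ W := by
  have hanti : Antitone fun k : ℕ => K ∩ {x | ⟪x - a, u⟫ ≤ 1 / (k + 1)} :=
    fun _ _ hkl => inter_subset_inter_right _
      (ofPred_subset_ofPred.2 fun _ hx => hx.trans (Nat.one_div_le_one_div hkl))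
  have hlimit : ∀ x ∈ ⋂ k : ℕ, K ∩ {x | ⟪x - a, u⟫ ≤ 1 / (k + 1)}, W ∈ 𝓝 x := by
    intro x hx
    rw [mem_iInter] at hx
    have hx0 : ⟪x - a, u⟫ ≤ 0 :=
      ge_of_tendsto' tendsto_one_div_add_atTop_nhds_zero_nat fun k => (hx k).2
    obtain rfl : x = a := by
      by_contra hxa
      exact (hpos x ⟨(hx 0).1, hxa⟩).not_ge hx0
    exact hW
  obtain ⟨k, hk⟩ := exists_subset_nhds_of_isCompact' hanti.directed_ge
    (fun _ => isCompact_inter_setOf_inner_sub_le hK hKc ha hpos _)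
    (fun _ => hK.inter (isClosed_le (by fun_prop) continuous_const)) hlimit
  exact ⟨1 / (k + 1), by positivity, hk⟩

lemma exists_mem_interior_inner_sub_eq (hKc : Convex ℝ K) (ha : a ∈ K) {v : E}
    (hv : v ∈ interior K) {ℓ : ℝ} (hℓ : 0 < ℓ) (hℓv : ℓ ≤ ⟪v - a, u⟫) :
    ∃ w ∈ interior K, ⟪w - a, u⟫ = ℓ := by
  have hv0 : 0 < ⟪v - a, u⟫ := hℓ.trans_le hℓv
  refine ⟨a + (ℓ / ⟪v - a, u⟫) • (v - a),
    hKc.add_smul_sub_mem_interior ha hv ⟨by positivity, (div_le_one hv0).2 hℓv⟩, ?_⟩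
  rw [add_sub_cancel_left, real_inner_smul_left, div_mul_cancel₀ _ hv0.ne']

theorem exists_isConnected_cap [ProperSpace E] (hK : IsClosed K) (hKc : Convex ℝ K)
    (hKi : (interior K).Nonempty) (ha : a ∈ frontier K) (hpos : ∀ x ∈ K \ {a}, 0 < ⟪x - a, u⟫)
    {W : Set E} (hW : W ∈ 𝓝 a) :
    ∃ z > 0, (interior (K ∩ {x | ⟪x - a, u⟫ ≤ z})).Nonempty ∧
      frontier (K ∩ {x | ⟪x - a, u⟫ ≤ z}) ∩ {x | ⟪x - a, u⟫ < z} =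
        W ∩ frontier K ∩ {x | ⟪x - a, u⟫ < z} ∧
      IsConnected (frontier (K ∩ {x | ⟪x - a, u⟫ ≤ z}) ∩ {x | ⟪x - a, u⟫ < z}) := by
  have haK : a ∈ K := hK.frontier_subset ha
  have hf : Continuous fun x : E => ⟪x - a, u⟫ := by fun_prop
  obtain ⟨v, hv⟩ := hKi
  have hva : 0 < ⟪v - a, u⟫ := hpos v ⟨interior_subset hv, fun hva => ha.2 (hva ▸ hv)⟩
  obtain ⟨c, hc, hcW⟩ := exists_pos_inter_setOf_inner_sub_le_subset hK hKc haK hpos hW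
  -- below the height of `v`, every level is attained in the interior, on the segment `[a, v]`
  set z := min c ⟪v - a, u⟫
  have hz : 0 < z := lt_min hc hva
  have hlevels : ∀ t < z, ∃ w ∈ interior (K ∩ {x | ⟪x - a, u⟫ ≤ z}), t < ⟪w - a, u⟫ := by
    intro t ht
    have ht' : max t 0 < z := max_lt ht hz
    obtain ⟨w, hw, hwt⟩ := exists_mem_interior_inner_sub_eq (u := u) hKc haK hv
      (ℓ := (max t 0 + z) / 2) (by positivity) (by linarith [min_le_right c ⟪v - a, u⟫])
    refine ⟨w, ?_, by linarith [le_max_left t 0]⟩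
    rw [interior_inter]
    exact ⟨hw, interior_maximal (fun x (hx : _ < z) => hx.le) (isOpen_lt hf continuous_const)
      (show _ < z by linarith)⟩
  refine ⟨z, hz, (hlevels 0 hz).imp fun w hw => hw.1, ?_, ⟨a, ?_⟩,
    isPreconnected_frontier_inter_setOf_inner_sub_lt
      (hK.inter (isClosed_le hf continuous_const)) (hKc.inter (convex_setOf_inner_sub_le a u z))
      (isBounded_inter_setOf_inner_sub_le hK hKc haK hpos z) hlevels⟩
  · rw [frontier_inter_setOf_le_inter_setOf_lt hf, inter_assoc, inter_eq_right.2
      fun x hx => hcW ⟨hK.frontier_subset hx.1,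
        (hx.2 : ⟪x - a, u⟫ < z).le.trans (min_le_left _ _)⟩]
  · rw [frontier_inter_setOf_le_inter_setOf_lt hf]
    exact ⟨ha, by simpa using hz⟩

end ConvexCap

lemma exists_homeomorph_inter_preimage {X Y : Type*} [TopologicalSpace X] [TopologicalSpace Y]
    {r : X → Y} {U : Set X} {V : Set Y} (e : U ≃ₜ V) (he : ∀ x, (e x : Y) = r x) (O : Set Y) :
    ∃ e' : ↥(U ∩ r ⁻¹' O) ≃ₜ ↥(V ∩ O), ∀ x, (e' x : Y) = r x := by
  have hemb : IsEmbedding fun x : ↥(U ∩ r ⁻¹' O) => r x := by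
    have : (fun x : ↥(U ∩ r ⁻¹' O) => r x) = Subtype.val ∘ e ∘ inclusion inter_subset_left :=
      funext fun x => (he (inclusion inter_subset_left x)).symm
    rw [this]
    exact IsEmbedding.subtypeVal.comp (e.isEmbedding.comp (IsEmbedding.inclusion _))
  have hrange : range (fun x : ↥(U ∩ r ⁻¹' O) => r x) = V ∩ O := by
    ext y
    constructor
    · rintro ⟨⟨x, hxU, hxO⟩, rfl⟩
      refine ⟨?_, hxO⟩
      show r x ∈ V
      rw [← he ⟨x, hxU⟩]
      exact (e _).2
    · rintro ⟨hyV, hyO⟩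
      have hy : r (e.symm ⟨y, hyV⟩) = y := by rw [← he, e.apply_symm_apply]
      exact ⟨⟨e.symm ⟨y, hyV⟩, (e.symm ⟨y, hyV⟩).2, show r _ ∈ O by rw [hy]; exact hyO⟩, hy⟩
  exact ⟨hemb.toHomeomorph.trans (.setCongr hrange), fun x => rfl⟩

theorem convex_part_exists_general {n : ℕ}
    {M : Type*} [TopologicalSpace M]
    (r : M → Euc n) (hr : Continuous r)
    (o : M) (K₀ : Set (Euc n)) (u : Euc n)
    (hK₀ : IsClosed K₀) (hK₀c : Convex ℝ K₀) (hK₀i : (interior K₀).Nonempty)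
    (hstrict : ∀ x ∈ K₀ \ {r o}, 0 < ⟪x - r o, u⟫)
    (hloc : ∃ (U : Set M) (V : Set (Euc n)), IsOpen U ∧ o ∈ U ∧
      V ⊆ frontier K₀ ∧ r o ∈ V ∧
      (∃ W : Set (Euc n), IsOpen W ∧ V = W ∩ frontier K₀) ∧
      ∃ e : U ≃ₜ V, ∀ x : U, (e x : Euc n) = r x) :
    ∃ z : ℝ, 0 < z ∧
      ∃ K : Set (Euc n), IsCompact K ∧ Convex ℝ K ∧ (interior K).Nonempty ∧
        ∃ 𝒞 : Set M, IsOpen 𝒞 ∧ IsConnected 𝒞 ∧ o ∈ 𝒞 ∧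
          (∃ e : 𝒞 ≃ₜ ↥(frontier K ∩ {x | ⟪x - r o, u⟫ < z}),
            ∀ x : 𝒞, (e x : Euc n) = r x) ∧
          frontier K \ (frontier K ∩ {x | ⟪x - r o, u⟫ < z}) ⊆
            {x | ⟪x - r o, u⟫ = z} := by
  obtain ⟨U, V, hU, hoU, -, hoV, ⟨W, hW, rfl⟩, e, he⟩ := hloc
  obtain ⟨z, hz, hKi, hCV, hC⟩ :=
    exists_isConnected_cap hK₀ hK₀c hK₀i hoV.2 hstrict (hW.mem_nhds hoV.1)
  have hf : Continuous fun x : Euc n => ⟪x - r o, u⟫ := by fun_prop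
  obtain ⟨e', he'⟩ := exists_homeomorph_inter_preimage e he {x | ⟪x - r o, u⟫ < z}
  let eC := e'.trans (Homeomorph.setCongr hCV.symm)
  have := isConnected_iff_connectedSpace.1 hC
  refine ⟨z, hz, _, isCompact_inter_setOf_inner_sub_le hK₀ hK₀c (hK₀.frontier_subset hoV.2)
      hstrict z, hK₀c.inter (convex_setOf_inner_sub_le _ _ z), hKi, _,
    hU.inter ((isOpen_lt hf continuous_const).preimage hr),
    isConnected_iff_connectedSpace.2 (eC.symm.surjective.connectedSpace eC.symm.continuous),
    ⟨hoU, by simpa using hz⟩, ⟨eC, he'⟩, ?_⟩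
  rw [sdiff_self_inter]
  exact frontier_inter_setOf_le_diff_subset hf

/-- **Proposition 9: a convex part exists.** If `r` is strictly locally convex at `o`,
witnessed by a closed convex body `K₀` and a nonzero vector `u`, then there is a
convex part centered at `o`: a connected open subset `𝒞` of `M` containing `o`, mapped
by `r` homeomorphically onto `C = frontier K ∩ {x | ⟪x - r o, u⟫ < z}` for some compact
convex body `K` and some height `z > 0`, with `frontier K \ C` contained in the
hyperplane `{x | ⟪x - r o, u⟫ = z}`. -/
theorem convex_part_exists {n : ℕ} (hn : 3 ≤ n)
    {M : Type*} [TopologicalSpace M] [T2Space M] [ConnectedSpace M]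
    (hman : IsTopManifoldOfDim M (n - 1))
    (r : M → Euc n) (hr : Continuous r)
    (hbd : Bornology.IsBounded (Set.range r))
    (hcompl : CompleteWrtLengthDist r)
    (hlc : ∀ p : M, IsLocallyConvexAt r p)
    (o : M) (K₀ : Set (Euc n)) (u : Euc n) (hu : u ≠ 0)
    (hK₀ : IsClosed K₀) (hK₀c : Convex ℝ K₀) (hK₀i : (interior K₀).Nonempty)
    (hstrict : ∀ x ∈ K₀ \ {r o}, 0 < ⟪x - r o, u⟫)
    (hloc : ∃ (U : Set M) (V : Set (Euc n)), IsOpen U ∧ o ∈ U ∧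
      V ⊆ frontier K₀ ∧ r o ∈ V ∧
      (∃ W : Set (Euc n), IsOpen W ∧ V = W ∩ frontier K₀) ∧
      ∃ e : U ≃ₜ V, ∀ x : U, (e x : Euc n) = r x) :
    ∃ z : ℝ, 0 < z ∧
      ∃ K : Set (Euc n), IsCompact K ∧ Convex ℝ K ∧ (interior K).Nonempty ∧
        ∃ 𝒞 : Set M, IsOpen 𝒞 ∧ IsConnected 𝒞 ∧ o ∈ 𝒞 ∧
          (∃ e : 𝒞 ≃ₜ ↥(frontier K ∩ {x | ⟪x - r o, u⟫ < z}),
            ∀ x : 𝒞, (e x : Euc n) = r x) ∧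
          frontier K \ (frontier K ∩ {x | ⟪x - r o, u⟫ < z}) ⊆
            {x | ⟪x - r o, u⟫ = z} :=
  convex_part_exists_general r hr o K₀ u hK₀ hK₀c hK₀i hstrict hloc
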